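/- arXiv:1204.4770 — 7 statements merged into one kernel-verified Lean document; each statement's English description precedes it below -/
import Mathlib

section
/- The function t ↦ (1 - exp(t))² / (1 + exp(2t)) is monotonically increasing on [0, ∞). -/
/-! Since `1 + e^{2t} = 2 e^t cosh t`, the function equals `1 - 1 / cosh t`, and `cosh` is
positive and increasing on `[0, ∞)`. -/

open Real Set

theorem one_sub_exp_sq_div_one_add_exp_two_mul (t : ℝ) :
    (1 - exp t) ^ 2 / (1 + exp (2 * t)) = 1 - (cosh t)⁻¹ := by
  rw [cosh_eq, exp_neg, mul_comm, exp_mul, rpow_two]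
  field_simp
  ring

theorem monotoneOn_one_sub_inv_cosh : MonotoneOn (fun t : ℝ => 1 - (cosh t)⁻¹) (Ici 0) := by
  intro a ha b hb hab
  have hcosh : cosh a ≤ cosh b := cosh_le_cosh.2 (by rwa [abs_of_nonneg ha, abs_of_nonneg hb])
  exact sub_le_sub_left (inv_anti₀ (cosh_pos a) hcosh) 1

/-- The function `t ↦ (1 - exp t)^2 / (1 + exp (2t))` is monotonically increasing on `[0, ∞)`. -/
theorem stmt0 :
    MonotoneOn (fun t : ℝ => (1 - Real.exp t) ^ 2 / (1 + Real.exp (2 * t))) (Set.Ici 0) := by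
  simpa only [one_sub_exp_sq_div_one_add_exp_two_mul] using monotoneOn_one_sub_inv_cosh
end

section
/- For all t ≥ 0, (1 - exp(t))² / (1 + exp(2t)) ≤ t²/2. -/
/-!
Write `u = t / 2`. Then `exp t - 1 = 2 exp u sinh u` and `exp t + 1 = 2 exp u cosh u`, so the
inequality `|tanh u| ≤ |u|`, i.e. `|sinh u| ≤ |u| cosh u`, gives
`(exp t - 1)² ≤ u² (exp t + 1)²`; and `(exp t + 1)² ≤ 2 (1 + exp (2t))`.
-/

open Real

namespace Real

theorem sinh_le_mul_cosh {x : ℝ} (hx : 0 ≤ x) : sinh x ≤ x * cosh x := by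
  have hderiv (y : ℝ) : HasDerivAt (fun y ↦ y * cosh y - sinh y) (y * sinh y) y :=
    (((hasDerivAt_id' y).mul (hasDerivAt_cosh y)).sub (hasDerivAt_sinh y)).congr_deriv (by ring)
  have hmono : MonotoneOn (fun y ↦ y * cosh y - sinh y) (Set.Ici 0) := by
    refine monotoneOn_of_hasDerivWithinAt_nonneg (convex_Ici 0) (by fun_prop)
      (fun y _ ↦ (hderiv y).hasDerivWithinAt) fun y hy ↦ ?_
    rw [interior_Ici, Set.mem_Ioi] at hy
    exact mul_nonneg hy.le (sinh_nonneg_iff.mpr hy.le)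
  simpa using hmono Set.self_mem_Ici hx hx

theorem abs_sinh_le_abs_mul_cosh (x : ℝ) : |sinh x| ≤ |x| * cosh x := by
  rw [abs_sinh, ← cosh_abs]
  exact sinh_le_mul_cosh (abs_nonneg x)

theorem exp_two_mul_sub_one (x : ℝ) : exp (2 * x) - 1 = 2 * exp x * sinh x := by
  rw [sinh_eq]
  field_simp
  rw [mul_sub, ← exp_add, ← exp_add, add_neg_cancel, exp_zero, ← two_mul]

theorem exp_two_mul_add_one (x : ℝ) : exp (2 * x) + 1 = 2 * exp x * cosh x := by
  rw [cosh_eq]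
  field_simp
  rw [mul_add, ← exp_add, ← exp_add, add_neg_cancel, exp_zero, ← two_mul]

theorem sq_exp_sub_one_le (t : ℝ) : (exp t - 1) ^ 2 ≤ (t / 2) ^ 2 * (exp t + 1) ^ 2 := by
  have htwo : t = 2 * (t / 2) := by ring
  have hsq : sinh (t / 2) ^ 2 ≤ (t / 2 * cosh (t / 2)) ^ 2 := by
    rw [sq_le_sq, abs_mul, abs_of_pos (cosh_pos _)]
    exact abs_sinh_le_abs_mul_cosh _
  rw [htwo, exp_two_mul_sub_one, exp_two_mul_add_one, ← htwo]
  nlinarith [sq_nonneg (2 * exp (t / 2))]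

end Real

theorem stmt1_general (t : ℝ) :
    (1 - Real.exp t) ^ 2 / (1 + Real.exp (2 * t)) ≤ t ^ 2 / 2 := by
  have hexp : exp (2 * t) = exp t ^ 2 := by rw [← exp_nat_mul]; norm_num
  rw [div_le_iff₀ (by positivity), hexp]
  calc (1 - exp t) ^ 2 = (exp t - 1) ^ 2 := by ring
    _ ≤ (t / 2) ^ 2 * (exp t + 1) ^ 2 := sq_exp_sub_one_le t
    _ ≤ (t / 2) ^ 2 * (2 * (1 + exp t ^ 2)) := by
        gcongr
        nlinarith [sq_nonneg (exp t - 1)]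
    _ = t ^ 2 / 2 * (1 + exp t ^ 2) := by ring

/-- For all `t ≥ 0`, `(1 - exp t)^2 / (1 + exp (2t)) ≤ t^2 / 2`. -/
theorem stmt1 (t : ℝ) (ht : 0 ≤ t) :
    (1 - Real.exp t) ^ 2 / (1 + Real.exp (2 * t)) ≤ t ^ 2 / 2 :=
  stmt1_general t
end

section
/- Let α > 0 and a ≤ b be real numbers with b - a ≤ c for some c ≥ 0. Then (exp(αb) - exp(αa))² ≤ ((1 - exp(αc))²/(1 + exp(2αc))) · (exp(2αa) + exp(2αb)). -/
/-!
Put `x = exp (α a)`, `y = exp (α b)`, `t = exp (α c)`, so that `x ≤ y ≤ t x`. Clearing the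
denominator, the inequality becomes `(y - x)² (1 + t²) ≤ (1 - t)² (x² + y²)`, and the difference
of the two sides is exactly `2 (t x - y) (t y - x)`, a product of two nonnegative factors.
-/

theorem sub_sq_mul_one_add_sq_le {x y t : ℝ} (hx : 0 < x) (hxy : x ≤ y) (hyt : y ≤ t * x) :
    (y - x) ^ 2 * (1 + t ^ 2) ≤ (1 - t) ^ 2 * (x ^ 2 + y ^ 2) := by
  have ht : 1 ≤ t := le_of_mul_le_mul_right (by linarith : 1 * x ≤ t * x) hx
  have hty : x ≤ t * y := by nlinarith
  have key : (1 - t) ^ 2 * (x ^ 2 + y ^ 2) - (y - x) ^ 2 * (1 + t ^ 2)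
      = 2 * ((t * x - y) * (t * y - x)) := by ring
  linarith [mul_nonneg (sub_nonneg.2 hyt) (sub_nonneg.2 hty)]

theorem Real.exp_two_mul_mul (α a : ℝ) : Real.exp (2 * α * a) = Real.exp (α * a) ^ 2 := by
  rw [sq, ← Real.exp_add]
  ring_nf

theorem stmt2_general (α a b c : ℝ) (hα : 0 < α) (hab : a ≤ b) (hbac : b - a ≤ c) :
    (Real.exp (α * b) - Real.exp (α * a)) ^ 2 ≤
      ((1 - Real.exp (α * c)) ^ 2 / (1 + Real.exp (2 * α * c))) *
        (Real.exp (2 * α * a) + Real.exp (2 * α * b)) := by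
  have hxy : Real.exp (α * a) ≤ Real.exp (α * b) :=
    Real.exp_le_exp.2 (mul_le_mul_of_nonneg_left hab hα.le)
  have hyt : Real.exp (α * b) ≤ Real.exp (α * c) * Real.exp (α * a) := by
    rw [← Real.exp_add, Real.exp_le_exp]
    linarith [mul_le_mul_of_nonneg_left hbac hα.le]
  rw [Real.exp_two_mul_mul α a, Real.exp_two_mul_mul α b, Real.exp_two_mul_mul α c,
    div_mul_eq_mul_div, le_div_iff₀ (by positivity)]
  exact sub_sq_mul_one_add_sq_le (Real.exp_pos _) hxy hyt

/-- Key pointwise inequality for exponentials: if `α > 0`, `a ≤ b`, `0 ≤ c` and `b - a ≤ c`,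
then `(exp (αb) - exp (αa))^2 ≤ ((1 - exp (αc))^2 / (1 + exp (2αc))) * (exp (2αa) + exp (2αb))`. -/
theorem stmt2 (α a b c : ℝ) (hα : 0 < α) (hab : a ≤ b) (hc : 0 ≤ c) (hbac : b - a ≤ c) :
    (Real.exp (α * b) - Real.exp (α * a)) ^ 2 ≤
      ((1 - Real.exp (α * c)) ^ 2 / (1 + Real.exp (2 * α * c))) *
        (Real.exp (2 * α * a) + Real.exp (2 * α * b)) :=
  stmt2_general α a b c hα hab hbac
end

section
/- Let a ≤ j ≤ b be real numbers and α > 0. Define h(t) = αt for t ≤ j and h(t) = 2αj - αt for t > j (tent function), and f = exp ∘ h. Then (f(b) - f(a))² ≤ ((1 - exp(α(b-a)))²/(1 + exp(2α(b-a)))) · (f(a)² + f(b)²). -/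
/-! Write `u = f a`, `v = f b` and `E = exp (α (b - a))`. The tent function is `α`-Lipschitz, so
`v / u` lies in `[E⁻¹, E]`, and the defect of the inequality is exactly `2 (E u - v) (E v - u) ≥ 0`. -/

open Real

theorem sub_sq_mul_one_add_sq_le_s3 {u v E : ℝ} (hv : v ≤ E * u) (hu : u ≤ E * v) :
    (v - u) ^ 2 * (1 + E ^ 2) ≤ (1 - E) ^ 2 * (u ^ 2 + v ^ 2) := by
  linear_combination 2 * mul_nonneg (sub_nonneg.2 hv) (sub_nonneg.2 hu)

theorem exp_sub_exp_sq_le_of_abs_sub_le {x y d : ℝ} (hxy : |y - x| ≤ d) :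
    (exp y - exp x) ^ 2 ≤ ((1 - exp d) ^ 2 / (1 + exp (2 * d))) * (exp x ^ 2 + exp y ^ 2) := by
  obtain ⟨hlo, hhi⟩ := abs_le.1 hxy
  have hy : exp y ≤ exp d * exp x := by rw [← exp_add]; exact exp_le_exp.2 (by linarith)
  have hx : exp x ≤ exp d * exp y := by rw [← exp_add]; exact exp_le_exp.2 (by linarith)
  rw [div_mul_eq_mul_div, le_div_iff₀ (by positivity), mul_comm 2 d, exp_mul, rpow_two]
  exact sub_sq_mul_one_add_sq_le_s3 hy hx

/-- Core tent-function estimate: for `a ≤ j ≤ b` and `α > 0`, with `h` the tent function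
peaking at `j` with slope `α` and `f = exp ∘ h`,
`(f b - f a)^2 ≤ ((1 - exp (α (b - a)))^2 / (1 + exp (2 α (b - a)))) * (f a ^ 2 + f b ^ 2)`. -/
theorem stmt3 (α a j b : ℝ) (hα : 0 < α) (haj : a ≤ j) (hjb : j ≤ b) :
    let h : ℝ → ℝ := fun t => if t ≤ j then α * t else 2 * α * j - α * t
    let f : ℝ → ℝ := fun t => Real.exp (h t)
    (f b - f a) ^ 2 ≤
      ((1 - Real.exp (α * (b - a))) ^ 2 / (1 + Real.exp (2 * α * (b - a)))) *
        (f a ^ 2 + f b ^ 2) := by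
  intro h f
  have ha : h a = α * a := if_pos haj
  have hb : h b = 2 * α * j - α * b := by
    by_cases hbj : b ≤ j
    · rw [show b = j from le_antisymm hbj hjb]; simp only [h, le_refl, if_true]; ring
    · exact if_neg hbj
  have hlip : |h b - h a| ≤ α * (b - a) := by
    rw [ha, hb, abs_le]
    constructor <;> nlinarith
  simpa only [mul_assoc] using exp_sub_exp_sq_le_of_abs_sub_le hlip
end

section
/- Let Γ be a countable weighted graph with symmetric edge weights π : G × G → ℝ≥0 and vertex weights θ : G → (0,∞), and let ρ be a metric on G adapted to (π,θ), i.e. (1/θ(x))·Σ_y π(x,y)·ρ(x,y)² ≤ 1 for all x. If f : G → ℝ satisfies (f(y) - f(x))² ≤ C·ρ(x,y)²·(f(x)² + f(y)²) whenever π(x,y) > 0, then the Dirichlet form E(f,f) = (1/2)·Σ_{x,y} π(x,y)·(f(y) - f(x))² satisfies E(f,f) ≤ C·Σ_x f(x)²·θ(x). -/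
open scoped ENNReal

/-!
On an edge `x ~ y` the hypothesis on `f`, applied in both orientations, bounds `(f y - f x)²` by
`C · min(ρ(x,y)², ρ(y,x)²) · (f(x)² + f(y)²) ≤ C · (ρ(x,y)² f(x)² + ρ(y,x)² f(y)²)`. Summing against
`π` and using its symmetry, the two halves of the double sum coincide, and each equals
`C · Σ_x f(x)² Σ_y π(x,y) ρ(x,y)²`, which adaptedness bounds by `C · Σ_x f(x)² θ(x)`.
Working in `ℝ≥0∞` makes all rearrangements of the sums free.
-/

namespace ENNReal

theorem min_mul_add_le (a b x y : ℝ≥0∞) : min a b * (x + y) ≤ a * x + b * y := by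
  rw [mul_add]
  gcongr
  exacts [min_le_left a b, min_le_right a b]

theorem ofReal_le_ofReal_mul_mul {d C p w : ℝ} (hp : 0 ≤ p) (hw : 0 ≤ w) (h : d ≤ C * p * w) :
    ENNReal.ofReal d ≤ ENNReal.ofReal C * ENNReal.ofReal p * ENNReal.ofReal w := by
  rw [← ofReal_mul' hp, ← ofReal_mul' hw]
  exact ofReal_le_ofReal h

theorem half_tsum_tsum_le {G : Type*} {c : ℝ≥0∞} {a e : G → G → ℝ≥0∞} {g t : G → ℝ≥0∞}
    (ha : ∀ x y, a x y ≤ c * (e x y * g x + e y x * g y)) (he : ∀ x, ∑' y, e x y ≤ t x) :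
    1 / 2 * ∑' x, ∑' y, a x y ≤ c * ∑' x, t x * g x := by
  have hswap : ∑' x, ∑' y, e y x * g y = ∑' x, ∑' y, e x y * g x := ENNReal.tsum_comm
  calc 1 / 2 * ∑' x, ∑' y, a x y
      ≤ 1 / 2 * ∑' x, ∑' y, c * (e x y * g x + e y x * g y) := by gcongr with x y; exact ha x y
    _ = c * ∑' x, ∑' y, e x y * g x := by
      simp only [ENNReal.tsum_mul_left, ENNReal.tsum_add, hswap]
      rw [← two_mul, mul_left_comm c, ← mul_assoc, one_div,
        ENNReal.inv_mul_cancel two_ne_zero ENNReal.ofNat_ne_top, one_mul]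
    _ ≤ c * ∑' x, t x * g x := by
      gcongr with x
      rw [ENNReal.tsum_mul_right]
      gcongr
      exact he x

end ENNReal

open ENNReal in
theorem edgeEnergy_le {G : Type*} {π ρ : G → G → ℝ} {C : ℝ} {f : G → ℝ}
    (hπsymm : ∀ x y, π x y = π y x)
    (hf : ∀ x y, 0 < π x y → (f y - f x) ^ 2 ≤ C * ρ x y ^ 2 * (f x ^ 2 + f y ^ 2)) (x y : G) :
    ENNReal.ofReal (π x y * (f y - f x) ^ 2) ≤ ENNReal.ofReal C *
      (ENNReal.ofReal (π x y * ρ x y ^ 2) * ENNReal.ofReal (f x ^ 2) +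
        ENNReal.ofReal (π y x * ρ y x ^ 2) * ENNReal.ofReal (f y ^ 2)) := by
  rcases le_or_gt (π x y) 0 with hπ | hπ
  · simp [ofReal_of_nonpos (mul_nonpos_of_nonpos_of_nonneg hπ (sq_nonneg _))]
  have hxy := ofReal_le_ofReal_mul_mul (sq_nonneg _) (by positivity) (hf x y hπ)
  have hyx := ofReal_le_ofReal_mul_mul (sq_nonneg _) (by positivity) (hf y x (hπsymm x y ▸ hπ))
  rw [← neg_sub, neg_sq, add_comm (f y ^ 2)] at hyx
  rw [ofReal_add (sq_nonneg _) (sq_nonneg _)] at hxy hyx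
  calc ENNReal.ofReal (π x y * (f y - f x) ^ 2)
      = ENNReal.ofReal (π x y) * ENNReal.ofReal ((f y - f x) ^ 2) := ofReal_mul hπ.le
    _ ≤ ENNReal.ofReal (π x y) * (ENNReal.ofReal C *
          (min (ENNReal.ofReal (ρ x y ^ 2)) (ENNReal.ofReal (ρ y x ^ 2)) *
            (ENNReal.ofReal (f x ^ 2) + ENNReal.ofReal (f y ^ 2)))) := by
      rw [min_mul, mul_min, ← mul_assoc, ← mul_assoc]
      gcongr
      exact le_min hxy hyx
    _ ≤ ENNReal.ofReal (π x y) * (ENNReal.ofReal C *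
          (ENNReal.ofReal (ρ x y ^ 2) * ENNReal.ofReal (f x ^ 2) +
            ENNReal.ofReal (ρ y x ^ 2) * ENNReal.ofReal (f y ^ 2))) := by
      gcongr
      exact min_mul_add_le _ _ _ _
    _ = _ := by
      rw [ofReal_mul hπ.le, ofReal_mul (hπsymm x y ▸ hπ.le), ← hπsymm y x]
      ring

theorem stmt5_general {G : Type*} (π : G → G → ℝ) (θ : G → ℝ) (ρ : G → G → ℝ)
    (hπsymm : ∀ x y, π x y = π y x)
    (hadapted : ∀ x, (∑' y : G, ENNReal.ofReal (π x y * ρ x y ^ 2)) ≤ ENNReal.ofReal (θ x))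
    (C : ℝ) (f : G → ℝ)
    (hf : ∀ x y, 0 < π x y → (f y - f x) ^ 2 ≤ C * ρ x y ^ 2 * (f x ^ 2 + f y ^ 2)) :
    (1 / 2 : ℝ≥0∞) * ∑' x : G, ∑' y : G, ENNReal.ofReal (π x y * (f y - f x) ^ 2) ≤
      ENNReal.ofReal C * ∑' x : G, ENNReal.ofReal (f x ^ 2 * θ x) := by
  calc (1 / 2 : ℝ≥0∞) * ∑' x : G, ∑' y : G, ENNReal.ofReal (π x y * (f y - f x) ^ 2)
      ≤ ENNReal.ofReal C * ∑' x : G, ENNReal.ofReal (θ x) * ENNReal.ofReal (f x ^ 2) :=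
        ENNReal.half_tsum_tsum_le (edgeEnergy_le hπsymm hf) hadapted
    _ = ENNReal.ofReal C * ∑' x : G, ENNReal.ofReal (f x ^ 2 * θ x) := by
        simp only [mul_comm (ENNReal.ofReal (θ _)), ENNReal.ofReal_mul (sq_nonneg _)]

/-- Lemma 2.5: if `ρ` is adapted to `(π, θ)` and
`(f y - f x)^2 ≤ C ρ(x,y)^2 (f x ^ 2 + f y ^ 2)` on edges, then the Dirichlet form of `f`
is bounded by `C` times its `L²(θ)` norm.  Sums are interpreted in `[0, ∞]`. -/
theorem stmt5 {G : Type*} [Countable G] (π : G → G → ℝ) (θ : G → ℝ) (ρ : G → G → ℝ)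
    (hπ : ∀ x y, 0 ≤ π x y) (hπsymm : ∀ x y, π x y = π y x) (hθ : ∀ x, 0 < θ x)
    (hρ : ∀ x y, 0 ≤ ρ x y)
    (hadapted : ∀ x, (∑' y : G, ENNReal.ofReal (π x y * ρ x y ^ 2)) ≤ ENNReal.ofReal (θ x))
    (C : ℝ) (hC : 0 ≤ C) (f : G → ℝ)
    (hf : ∀ x y, 0 < π x y → (f y - f x) ^ 2 ≤ C * ρ x y ^ 2 * (f x ^ 2 + f y ^ 2)) :
    (1 / 2 : ℝ≥0∞) * ∑' x : G, ∑' y : G, ENNReal.ofReal (π x y * (f y - f x) ^ 2) ≤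
      ENNReal.ofReal C * ∑' x : G, ENNReal.ofReal (f x ^ 2 * θ x) :=
  stmt5_general π θ ρ hπsymm hadapted C f hf
end

section
/- On ℤ≥0 with edge weights π(n, n+1) = (n+1)², for every finitely supported f : ℤ≥0 → ℝ one has Σ_{n≥0} (n+1)²·(f(n) - f(n+1))² ≥ (1/9)·Σ_{n≥0} f(n)². -/
/-!
The inequality holds with the Hardy constant `1/4` in place of `1/9`. Pointwise,
`(n+1)² (a - b)² + (n+1)/2 · b² ≥ (1/4 + n/2) · a²`, a positive semidefinite quadratic form in
`(a, b)`. Summing over `n` with `a = f n`, `b = f (n+1)`, the terms `(n+1)/2 · f (n+1)² - n/2 · f n²`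
telescope to `0` for finitely supported `f`.
-/

open Finset

lemma hardy_pointwise {x : ℝ} (hx : 0 ≤ x) (a b : ℝ) :
    1 / 4 * a ^ 2 ≤ (x + 1) ^ 2 * (a - b) ^ 2 + ((x + 1) / 2 * b ^ 2 - x / 2 * a ^ 2) := by
  set k := x + 1
  set A := k ^ 2 - k / 2 + 1 / 4
  have hA : 0 < A := by
    simp only [A]
    nlinarith [sq_nonneg (k - 1 / 4)]
  have sos : A * ((k ^ 2 * (a - b) ^ 2 + (k / 2 * b ^ 2 - x / 2 * a ^ 2)) - 1 / 4 * a ^ 2)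
      = (A * a - k ^ 2 * b) ^ 2 + k / 8 * b ^ 2 := by
    simp only [A, k]
    ring
  have hprod : 0 ≤ A * ((k ^ 2 * (a - b) ^ 2 + (k / 2 * b ^ 2 - x / 2 * a ^ 2)) - 1 / 4 * a ^ 2) := by
    rw [sos]
    positivity
  linarith [nonneg_of_mul_nonneg_right hprod hA]

lemma hardy_sum_range {f : ℕ → ℝ} {N : ℕ} (hN : f N = 0) :
    1 / 4 * ∑ n ∈ range N, f n ^ 2 ≤
      ∑ n ∈ range N, ((n : ℝ) + 1) ^ 2 * (f n - f (n + 1)) ^ 2 := by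
  have telescope : ∑ n ∈ range N, (((n + 1 : ℕ) : ℝ) / 2 * f (n + 1) ^ 2 - (n : ℝ) / 2 * f n ^ 2)
      = 0 := by
    rw [sum_range_sub (fun n => (n : ℝ) / 2 * f n ^ 2), hN]
    simp
  have pointwise : ∀ n ∈ range N,
      1 / 4 * f n ^ 2 ≤ ((n : ℝ) + 1) ^ 2 * (f n - f (n + 1)) ^ 2
        + ((((n + 1 : ℕ) : ℝ) / 2 * f (n + 1) ^ 2 - (n : ℝ) / 2 * f n ^ 2)) := fun n _ => by
    exact_mod_cast hardy_pointwise (Nat.cast_nonneg n) (f n) (f (n + 1))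
  calc 1 / 4 * ∑ n ∈ range N, f n ^ 2 = ∑ n ∈ range N, 1 / 4 * f n ^ 2 := mul_sum _ _ _
    _ ≤ _ := sum_le_sum pointwise
    _ = _ := by rw [sum_add_distrib, telescope, add_zero]

theorem hardy_tsum {f : ℕ → ℝ} (hf : (Function.support f).Finite) :
    1 / 4 * ∑' n : ℕ, f n ^ 2 ≤ ∑' n : ℕ, ((n : ℝ) + 1) ^ 2 * (f n - f (n + 1)) ^ 2 := by
  obtain ⟨N, hsupp⟩ := hf.toFinset.exists_nat_subset_range
  have vanish : ∀ n ∉ range N, f n = 0 := fun n hn => by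
    by_contra h
    exact hn (hsupp (hf.mem_toFinset.2 h))
  have vanish_succ : ∀ n ∉ range N, f (n + 1) = 0 := fun n hn =>
    vanish _ (by simp only [mem_range, not_lt] at hn ⊢; omega)
  rw [tsum_eq_sum (s := range N) fun n hn => by simp [vanish n hn],
    tsum_eq_sum (s := range N) fun n hn => by simp [vanish n hn, vanish_succ n hn]]
  exact hardy_sum_range (vanish N (by simp))

/-- Hardy-type inequality: on `ℤ≥0` with edge weights `π(n, n+1) = (n+1)²`, every finitely
supported `f` satisfies `Σ (n+1)² (f n - f (n+1))² ≥ (1/9) Σ f n ²`. -/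
theorem stmt8 (f : ℕ → ℝ) (hf : (Function.support f).Finite) :
    (∑' n : ℕ, ((n : ℝ) + 1) ^ 2 * (f n - f (n + 1)) ^ 2) ≥
      (1 / 9 : ℝ) * ∑' n : ℕ, f n ^ 2 := by
  have hsq : 0 ≤ ∑' n : ℕ, f n ^ 2 := tsum_nonneg fun n => sq_nonneg (f n)
  linarith [hardy_tsum hf]
end

section
/- On ℤ≥0 with nearest-neighbor edge weights π_α(n,n+1) = (n+1)²·log_+^α(n+1), where log_+(x)=max(log x,1), for every α with 0 < α < 2 and every k ≥ 0, every finitely supported f : ℤ≥0 → ℝ vanishing on {0,...,k} satisfies Σ_n π_α(n,n+1)(f(n)-f(n+1))² ≥ (log_+^α(k+1)/9)·Σ_n f(n)². -/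
/-!
Each edge term is bounded below by the ground-state inequality
`(x - y)² ≥ (1 - r) x² + (1 - r⁻¹) y²` (`r > 0`, equality at `y = r x`). Summing these with the
ratios `r n = (2n+3)/(2n+4)` and reindexing the `y`-terms turns the Dirichlet form into
`Σ V n f(n)²` with a potential `V n ≥ log_+^α(n)/4`; since `log_+` is monotone and `f` vanishes
below `k + 1`, this is at least `log_+^α(k+1)/4 · Σ f(n)²`.
-/

open Finset Real

lemma one_sub_mul_sq_add_one_sub_inv_mul_sq_le_sub_sq {r : ℝ} (hr : 0 < r) (x y : ℝ) :
    (1 - r) * x ^ 2 + (1 - r⁻¹) * y ^ 2 ≤ (x - y) ^ 2 := by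
  have key : (x - y) ^ 2 - ((1 - r) * x ^ 2 + (1 - r⁻¹) * y ^ 2) = (r * x - y) ^ 2 / r := by
    field_simp
    ring
  have : 0 ≤ (r * x - y) ^ 2 / r := by positivity
  linarith

lemma sum_range_add_mul_sq_le_sum_range_mul_sub_sq {a d w : ℕ → ℝ}
    (hedge : ∀ n x y, a n * x ^ 2 + d (n + 1) * y ^ 2 ≤ w n * (x - y) ^ 2)
    {f : ℕ → ℝ} {N : ℕ} (h0 : f 0 = 0) (hN : f N = 0) :
    ∑ n ∈ range N, (a n + d n) * f n ^ 2 ≤ ∑ n ∈ range N, w n * (f n - f (n + 1)) ^ 2 := by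
  have hshift : ∑ n ∈ range N, d (n + 1) * f (n + 1) ^ 2 = ∑ n ∈ range N, d n * f n ^ 2 := by
    have h := (sum_range_succ' (fun n => d n * f n ^ 2) N).symm.trans
      (sum_range_succ (fun n => d n * f n ^ 2) N)
    simpa [h0, hN] using h
  calc ∑ n ∈ range N, (a n + d n) * f n ^ 2
      = ∑ n ∈ range N, (a n * f n ^ 2 + d (n + 1) * f (n + 1) ^ 2) := by
        rw [sum_add_distrib, hshift, ← sum_add_distrib]
        exact sum_congr rfl fun n _ => by ring
    _ ≤ ∑ n ∈ range N, w n * (f n - f (n + 1)) ^ 2 :=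
        sum_le_sum fun n _ => hedge n (f n) (f (n + 1))

noncomputable def logPlus (x : ℝ) : ℝ := max (log x) 1

lemma one_le_logPlus (x : ℝ) : 1 ≤ logPlus x := le_max_right _ _

lemma logPlus_le_logPlus {x y : ℝ} (hx : 0 ≤ x) (hxy : x ≤ y) : logPlus x ≤ logPlus y := by
  rcases hx.eq_or_lt with rfl | hx
  · simp [logPlus]
  · exact max_le_max (log_le_log hx hxy) le_rfl

lemma logPlus_rpow_le_logPlus_rpow {α x y : ℝ} (hα : 0 ≤ α) (hx : 0 ≤ x) (hxy : x ≤ y) :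
    logPlus x ^ α ≤ logPlus y ^ α :=
  rpow_le_rpow (zero_le_one.trans (one_le_logPlus x)) (logPlus_le_logPlus hx hxy) hα

namespace LogWeightedChain

noncomputable def weight (α : ℝ) (n : ℕ) : ℝ := ((n : ℝ) + 1) ^ 2 * logPlus ((n : ℝ) + 1) ^ α

/-- `weight α n * (1 - r n)` for the ratio `r n = (2n+3)/(2n+4)`. -/
noncomputable def forwardCoeff (α : ℝ) (n : ℕ) : ℝ := weight α n / (2 * (n : ℝ) + 4)

/-- `weight α (m-1) * (1 - (r (m-1))⁻¹)` for `m ≥ 1`, and `0` for `m = 0`. -/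
noncomputable def backwardCoeff (α : ℝ) (m : ℕ) : ℝ :=
  -((m : ℝ) ^ 2 * logPlus m ^ α / (2 * (m : ℝ) + 1))

lemma weight_nonneg (α : ℝ) (n : ℕ) : 0 ≤ weight α n := by
  have := rpow_pos_of_pos (zero_lt_one.trans_le (one_le_logPlus ((n : ℝ) + 1))) α
  unfold weight
  positivity

/-- `r n = (2n+3)/(2n+4) ≈ φ(n+1)/φ(n)` for the Hardy ground state `φ(n) = n^{-1/2}`. -/
lemma forwardCoeff_mul_sq_add_backwardCoeff_mul_sq_le (α : ℝ) (n : ℕ) (x y : ℝ) :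
    forwardCoeff α n * x ^ 2 + backwardCoeff α (n + 1) * y ^ 2 ≤ weight α n * (x - y) ^ 2 := by
  have hr : (0 : ℝ) < (2 * n + 3) / (2 * n + 4) := by positivity
  have h := mul_le_mul_of_nonneg_left
    (one_sub_mul_sq_add_one_sub_inv_mul_sq_le_sub_sq hr x y) (weight_nonneg α n)
  refine le_of_eq_of_le ?_ h
  simp only [forwardCoeff, backwardCoeff, weight]
  push_cast
  field_simp
  ring

lemma logPlus_rpow_div_four_le (α : ℝ) (hα : 0 ≤ α) (n : ℕ) :
    logPlus n ^ α / 4 ≤ forwardCoeff α n + backwardCoeff α n := by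
  set L := logPlus n ^ α
  have hL : 0 ≤ L := rpow_nonneg (zero_le_one.trans (one_le_logPlus _)) α
  have hmono : L ≤ logPlus ((n : ℝ) + 1) ^ α :=
    logPlus_rpow_le_logPlus_rpow hα n.cast_nonneg (by linarith)
  have hsum : forwardCoeff α n + backwardCoeff α n
      ≥ ((n : ℝ) + 1) ^ 2 * L / (2 * n + 4) - (n : ℝ) ^ 2 * L / (2 * n + 1) := by
    simp only [forwardCoeff, backwardCoeff, weight, ← sub_eq_add_neg]
    gcongr
  -- `(n+1)²/(2n+4) - n²/(2n+1) = (n²+4n+1)/((2n+4)(2n+1)) ≥ 1/4`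
  have hgap : L / 4 ≤ ((n : ℝ) + 1) ^ 2 * L / (2 * n + 4) - (n : ℝ) ^ 2 * L / (2 * n + 1) := by
    rw [div_sub_div _ _ (by positivity) (by positivity), le_div_iff₀ (by positivity)]
    nlinarith [mul_nonneg hL (by positivity : (0 : ℝ) ≤ 6 * n)]
  linarith

lemma logPlus_rpow_div_nine_le (α : ℝ) (hα : 0 ≤ α) {k n : ℕ} (hkn : k < n) :
    logPlus ((k : ℝ) + 1) ^ α / 9 ≤ forwardCoeff α n + backwardCoeff α n := by
  have hkn' : (k : ℝ) + 1 ≤ n := by exact_mod_cast hkn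
  have hmono := logPlus_rpow_le_logPlus_rpow hα (by positivity) hkn'
  have hpos : 0 ≤ logPlus ((k : ℝ) + 1) ^ α :=
    rpow_nonneg (zero_le_one.trans (one_le_logPlus _)) α
  linarith [logPlus_rpow_div_four_le α hα n]

end LogWeightedChain

open LogWeightedChain in
theorem stmt18_general (α : ℝ) (hα0 : 0 < α) (k : ℕ)
    (f : ℕ → ℝ) (hfin : (Function.support f).Finite) (hvan : ∀ n ≤ k, f n = 0) :
    (∑' n : ℕ, ((n : ℝ) + 1) ^ 2 * (max (Real.log ((n : ℝ) + 1)) 1) ^ α *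
        (f n - f (n + 1)) ^ 2) ≥
      ((max (Real.log ((k : ℝ) + 1)) 1) ^ α / 9) * ∑' n : ℕ, f n ^ 2 := by
  obtain ⟨M, hM⟩ := hfin.bddAbove
  have hf : ∀ n, M + 1 ≤ n → f n = 0 := fun n hn =>
    by_contra fun h => absurd (hM (Function.mem_support.2 h)) (by omega)
  rw [tsum_eq_sum (s := range (M + 1)) fun n hn => by
      simp [hf n (by simpa using hn), hf (n + 1) (by simp at hn; omega)],
    tsum_eq_sum (s := range (M + 1)) fun n hn => by simp [hf n (by simpa using hn)],
    ge_iff_le, mul_sum]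
  calc ∑ n ∈ range (M + 1), logPlus ((k : ℝ) + 1) ^ α / 9 * f n ^ 2
      ≤ ∑ n ∈ range (M + 1), (forwardCoeff α n + backwardCoeff α n) * f n ^ 2 := by
        refine sum_le_sum fun n _ => ?_
        rcases le_or_gt n k with hnk | hkn
        · simp [hvan n hnk]
        · exact mul_le_mul_of_nonneg_right (logPlus_rpow_div_nine_le α hα0.le hkn) (sq_nonneg _)
    _ ≤ ∑ n ∈ range (M + 1), weight α n * (f n - f (n + 1)) ^ 2 :=
        sum_range_add_mul_sq_le_sum_range_mul_sub_sq
          (forwardCoeff_mul_sq_add_backwardCoeff_mul_sq_le α)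
          (hvan 0 k.zero_le) (hf _ le_rfl)

/-- Dirichlet eigenvalue lower bound on the birth-death chain with weights
`π_α(n, n+1) = (n+1)² log_+^α (n+1)`: every finitely supported `f` vanishing on
`{0, …, k}` satisfies
`Σ_n π_α(n,n+1) (f n - f (n+1))² ≥ (log_+^α (k+1) / 9) Σ_n f n ²`. -/
theorem stmt18 (α : ℝ) (hα0 : 0 < α) (hα2 : α < 2) (k : ℕ)
    (f : ℕ → ℝ) (hfin : (Function.support f).Finite) (hvan : ∀ n ≤ k, f n = 0) :
    (∑' n : ℕ, ((n : ℝ) + 1) ^ 2 * (max (Real.log ((n : ℝ) + 1)) 1) ^ α *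
        (f n - f (n + 1)) ^ 2) ≥
      ((max (Real.log ((k : ℝ) + 1)) 1) ^ α / 9) * ∑' n : ℕ, f n ^ 2 :=
  stmt18_general α hα0 k f hfin hvan
end
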